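/- Let Q be the quotient of the polynomial ring ℤ[x_A, x_{A'}, x_b, x_c, x_{c'}, x_d] in six variables by the ideal generated by x_A·x_{A'} − 1, x_b² − 1, x_d·x_{c'} − x_b·x_{c'}², and x_d² − x_c·x_{c'}. Then the images in Q of the monomials x_A^s·x_{A'}^t·x_b^ε·x_d^δ·x_c^m·x_{c'}^r with s, t, m ∈ ℕ, ε, δ ∈ {0, 1}, r ≤ 2, δ·r = 0 and s·t = 0 form a ℤ-module basis of Q; in particular every element of Q is a ℤ-linear combination of such monomials in a unique way. (This is the precise form, for the subring generated by A, A⁻¹, b, c, c', d, of the paper's assertion that the rewriting rules (4) satisfy the hypotheses of the diamond lemma and hence give a unique normal form for the invariant F.) -/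

import Mathlib

open MvPolynomial

/-!
Orient the relations as the rewriting rules `AA' → 1`, `bb → 1`, `dc' → bc'c'`, `dd → cc'`
and `c'c'c' → cc'c'`. Each rule lowers the weight `4 deg_d + deg_c' + deg_A + deg_b`, so every
monomial rewrites, inside the quotient, to a normal-form monomial: these span. For uniqueness,
instead of resolving critical pairs, write down the normal form `nf e` of an exponent vector in
closed form and check that it is invariant under each rule applied anywhere. Then `x^e ↦ [nf e]`
kills the ideal, so it descends to coordinates on the quotient in which the normal-form monomials
are the standard basis.
-/

/-- Indices of the six variables `x_A, x_{A'}, x_b, x_c, x_{c'}, x_d`. -/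
inductive Var : Type
  | A : Var
  | A' : Var
  | b : Var
  | c : Var
  | c' : Var
  | d : Var
  deriving DecidableEq

open Var in
/-- The ideal of `ℤ[x_A, x_{A'}, x_b, x_c, x_{c'}, x_d]` generated by
`x_A x_{A'} - 1`, `x_b² - 1`, `x_d x_{c'} - x_b x_{c'}²`, `x_d² - x_c x_{c'}`. -/
noncomputable def relIdeal : Ideal (MvPolynomial Var ℤ) :=
  Ideal.span {X A * X A' - 1, X b ^ 2 - 1,
    X d * X c' - X b * X c' ^ 2, X d ^ 2 - X c * X c'}

/-- Exponent data of a normal-form monomial: `x_A^s x_{A'}^t x_b^ε x_d^δ x_c^m x_{c'}^r`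
with `ε, δ ∈ {0,1}`, `r ≤ 2`, `δr = 0` and `st = 0`. -/
structure NFIndex : Type where
  s : ℕ
  t : ℕ
  ε : ℕ
  δ : ℕ
  m : ℕ
  r : ℕ
  hε : ε ≤ 1
  hδ : δ ≤ 1
  hr : r ≤ 2
  hδr : δ * r = 0
  hst : s * t = 0

open Var in
/-- The image in the quotient ring of the normal-form monomial indexed by `i`. -/
noncomputable def nfMono (i : NFIndex) : MvPolynomial Var ℤ ⧸ relIdeal :=
  Ideal.Quotient.mk relIdeal
    (X A ^ i.s * X A' ^ i.t * X b ^ i.ε * X d ^ i.δ * X c ^ i.m * X c' ^ i.r)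

namespace MvPolynomial

variable {σ ι R : Type*} [CommRing R]

noncomputable def lmapExponents (f : (σ →₀ ℕ) → ι) : MvPolynomial σ R →ₗ[R] ι →₀ R :=
  Finsupp.lmapDomain R R f ∘ₗ (basisMonomials σ R).repr

@[simp]
theorem lmapExponents_monomial (f : (σ →₀ ℕ) → ι) (e : σ →₀ ℕ) (a : R) :
    lmapExponents f (monomial e a) = Finsupp.single (f e) a := by
  have : monomial e a = a • basisMonomials σ R e := by simp [smul_monomial]
  simp [lmapExponents, this, -coe_basisMonomials]

theorem lmapExponents_mul_binomial_eq_zero {f : (σ →₀ ℕ) → ι} {l r : σ →₀ ℕ}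
    (h : ∀ e, f (e + l) = f (e + r)) (p : MvPolynomial σ R) :
    lmapExponents f (p * (monomial l 1 - monomial r 1)) = 0 := by
  induction p using induction_on' with
  | monomial e a => simp [mul_sub, monomial_mul, h]
  | add p q hp hq => rw [add_mul, map_add, hp, hq, add_zero]

theorem lmapExponents_eq_zero_of_mem_span {κ : Type*} {f : (σ →₀ ℕ) → ι}
    {l r : κ → σ →₀ ℕ} (h : ∀ k e, f (e + l k) = f (e + r k)) {x : MvPolynomial σ R}
    (hx : x ∈ Ideal.span (Set.range fun k => monomial (l k) 1 - monomial (r k) 1)) :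
    lmapExponents f x = 0 := by
  suffices ∀ p, lmapExponents f (p * x) = 0 by simpa using this 1
  induction hx using Submodule.span_induction with
  | mem _ hg => obtain ⟨k, rfl⟩ := hg; exact lmapExponents_mul_binomial_eq_zero (h k)
  | zero => simp
  | add x y _ _ hx hy => simp [mul_add, hx, hy]
  | smul a x _ hx => intro p; rw [smul_eq_mul, ← mul_assoc]; exact hx (p * a)

end MvPolynomial

attribute [ext] NFIndex

open Var

local notation "π" => Ideal.Quotient.mk relIdeal

/- With `e_d = 2j + q`, the rule `dd → cc'` turns `d^e_d c'^e_c'` into `c^j c'^k d^q` with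
`k = e_c' + j`; if `q = 1` and `k ≥ 1`, the rule `dc' → bc'c'` then absorbs `d`; finally
`c'c'c' → cc'c'` gives `c'^(n+2) = c^n c'^2`. -/
def nf (e : Var →₀ ℕ) : NFIndex :=
  if h : e d % 2 = 1 ∧ 0 < e c' + e d / 2 then
    { s := e A - e A', t := e A' - e A, ε := (e b + 1) % 2, δ := 0,
      m := e c + e d / 2 + (e c' + e d / 2 - 1), r := min (e c' + e d / 2 + 1) 2,
      hε := by omega, hδ := by omega, hr := min_le_right _ _,
      hδr := zero_mul _, hst := Nat.mul_eq_zero.2 (by omega) }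
  else
    { s := e A - e A', t := e A' - e A, ε := e b % 2, δ := e d % 2,
      m := e c + e d / 2 + (e c' + e d / 2 - 2), r := min (e c' + e d / 2) 2,
      hε := by omega, hδ := by omega, hr := min_le_right _ _,
      hδr := Nat.mul_eq_zero.2 (by omega), hst := Nat.mul_eq_zero.2 (by omega) }

noncomputable def expOf (i : NFIndex) : Var →₀ ℕ :=
  Finsupp.single A i.s + Finsupp.single A' i.t + Finsupp.single b i.ε +
    Finsupp.single d i.δ + Finsupp.single c i.m + Finsupp.single c' i.r

theorem nf_expOf (i : NFIndex) : nf (expOf i) = i := by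
  have := i.hε; have := i.hδ; have := i.hr
  have := Nat.mul_eq_zero.1 i.hδr; have := Nat.mul_eq_zero.1 i.hst
  unfold nf
  simp only [expOf, Finsupp.coe_add, Pi.add_apply, Finsupp.single_apply, reduceCtorEq,
    ↓reduceIte, add_zero]
  split_ifs <;> ext <;> simp only <;> omega

def reductionWeight : Var → ℕ
  | A => 1
  | b => 1
  | c' => 1
  | d => 4
  | _ => 0

/- `c'c'c' → cc'c'` is not among the generators of `relIdeal` but follows from them; without it
the normal forms would not satisfy `r ≤ 2`. -/
inductive Rule : Type
  | AA' | bb | dc' | dd | c'c'c'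

namespace Rule

noncomputable def lhs : Rule → Var →₀ ℕ
  | AA' => Finsupp.single A 1 + Finsupp.single A' 1
  | bb => Finsupp.single b 2
  | dc' => Finsupp.single d 1 + Finsupp.single c' 1
  | dd => Finsupp.single d 2
  | c'c'c' => Finsupp.single c' 3

noncomputable def rhs : Rule → Var →₀ ℕ
  | AA' => 0
  | bb => 0
  | dc' => Finsupp.single b 1 + Finsupp.single c' 2
  | dd => Finsupp.single c 1 + Finsupp.single c' 1
  | c'c'c' => Finsupp.single c 1 + Finsupp.single c' 2

theorem nf_add_lhs (ρ : Rule) (e : Var →₀ ℕ) : nf (e + ρ.lhs) = nf (e + ρ.rhs) := by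
  unfold nf
  cases ρ <;> simp [lhs, rhs] <;> split_ifs <;> ext <;> simp <;> omega

theorem weight_rhs_lt_weight_lhs (ρ : Rule) :
    Finsupp.weight reductionWeight ρ.rhs < Finsupp.weight reductionWeight ρ.lhs := by
  cases ρ <;> simp [lhs, rhs, Finsupp.weight_single, reductionWeight]

theorem mk_monomial_lhs (ρ : Rule) : π (monomial ρ.lhs 1) = π (monomial ρ.rhs 1) := by
  have rel {p q : MvPolynomial Var ℤ} (h : p - q ∈ ({X A * X A' - 1, X b ^ 2 - 1,
      X d * X c' - X b * X c' ^ 2, X d ^ 2 - X c * X c'} : Set _)) : π p = π q :=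
    Ideal.Quotient.eq.2 (Ideal.subset_span h)
  have hAA' : π (X A) * π (X A') = 1 := by rw [← map_mul, ← map_one π]; exact rel (by simp)
  have hbb : π (X b) ^ 2 = 1 := by rw [← map_pow, ← map_one π]; exact rel (by simp)
  have hdc' : π (X d) * π (X c') = π (X b) * π (X c') ^ 2 := by
    simp only [← map_mul, ← map_pow]; exact rel (by simp)
  have hdd : π (X d) ^ 2 = π (X c) * π (X c') := by
    simp only [← map_mul, ← map_pow]; exact rel (by simp)
  cases ρ <;> simp only [lhs, rhs, monomial_add_single, ← X_pow_eq_monomial, monomial_zero',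
    pow_one, map_mul, map_pow, map_one]
  case c'c'c' =>
    linear_combination π (X c') * hdd - (π (X b) * π (X c') + π (X d)) * hdc' -
      π (X c') ^ 3 * hbb
  all_goals assumption

theorem relIdeal_le_span_binomials :
    relIdeal ≤ Ideal.span (Set.range fun ρ : Rule => monomial ρ.lhs 1 - monomial ρ.rhs 1) := by
  refine Ideal.span_le.2 ?_
  rintro g (rfl | rfl | rfl | rfl) <;> apply Ideal.subset_span <;>
    [use AA'; use bb; use dc'; use dd] <;> simp [lhs, rhs, monomial_add_single, ← X_pow_eq_monomial]

end Rule

theorem exists_lhs_le_or_eq_expOf (e : Var →₀ ℕ) :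
    (∃ ρ : Rule, ρ.lhs ≤ e) ∨ e = expOf (nf e) := by
  by_cases h : (1 ≤ e A ∧ 1 ≤ e A') ∨ 2 ≤ e b ∨ (1 ≤ e d ∧ 1 ≤ e c') ∨ 2 ≤ e d ∨ 3 ≤ e c'
  · left
    simp only [Finsupp.le_def]
    rcases h with h | h | h | h | h <;> [use .AA'; use .bb; use .dc'; use .dd; use .c'c'c'] <;>
      intro v <;> cases v <;>
      simp only [Rule.lhs, Finsupp.coe_add, Pi.add_apply, Finsupp.single_apply, reduceCtorEq,
        ↓reduceIte, add_zero] <;> omega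
  · right
    unfold nf
    split_ifs <;> ext v <;> cases v <;>
      simp only [expOf, Finsupp.coe_add, Pi.add_apply, Finsupp.single_apply, reduceCtorEq,
        ↓reduceIte, add_zero] <;> omega

theorem mk_monomial_expOf (i : NFIndex) : π (monomial (expOf i) 1) = nfMono i := by
  simp only [expOf, nfMono, monomial_add_single, ← X_pow_eq_monomial]

theorem mk_monomial_eq_nfMono (e : Var →₀ ℕ) : π (monomial e 1) = nfMono (nf e) := by
  rcases exists_lhs_le_or_eq_expOf e with ⟨ρ, hρ⟩ | he
  · obtain ⟨e', he⟩ := le_iff_exists_add'.1 hρ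
    rw [he]
    calc π (monomial (e' + ρ.lhs) 1) = π (monomial e' 1) * π (monomial ρ.rhs 1) := by
          rw [← ρ.mk_monomial_lhs, ← map_mul, monomial_mul, one_mul]
      _ = nfMono (nf (e' + ρ.lhs)) := by
          rw [← map_mul, monomial_mul, one_mul, mk_monomial_eq_nfMono, ρ.nf_add_lhs]
  · rw [he, mk_monomial_expOf, nf_expOf]
termination_by Finsupp.weight reductionWeight e
decreasing_by simpa [he] using ρ.weight_rhs_lt_weight_lhs

theorem span_nfMono_eq_top : Submodule.span ℤ (Set.range nfMono) = ⊤ := by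
  rw [eq_top_iff]
  rintro x -
  obtain ⟨p, rfl⟩ := Ideal.Quotient.mk_surjective x
  induction p using induction_on' with
  | monomial e a =>
    rw [← mul_one a, ← smul_eq_mul, ← smul_monomial, map_zsmul, mk_monomial_eq_nfMono]
    exact Submodule.smul_mem _ _ (Submodule.subset_span ⟨nf e, rfl⟩)
  | add p q hp hq => rw [map_add]; exact add_mem hp hq

noncomputable def nfCoords : (MvPolynomial Var ℤ ⧸ relIdeal) →ₗ[ℤ] NFIndex →₀ ℤ :=
  (relIdeal.restrictScalars ℤ).liftQ (lmapExponents nf) (fun _ hx =>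
    LinearMap.mem_ker.2 <|
      lmapExponents_eq_zero_of_mem_span Rule.nf_add_lhs (Rule.relIdeal_le_span_binomials hx)) ∘ₗ
  (Submodule.Quotient.restrictScalarsEquiv ℤ relIdeal).symm.toLinearMap

theorem nfCoords_nfMono (i : NFIndex) : nfCoords (nfMono i) = Finsupp.single i 1 := by
  rw [← mk_monomial_expOf, nfCoords, LinearMap.comp_apply, LinearEquiv.coe_coe,
    ← Ideal.Quotient.mk_eq_mk, Submodule.Quotient.restrictScalarsEquiv_symm_mk,
    Submodule.liftQ_apply, lmapExponents_monomial, nf_expOf]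

theorem nfMono_linearIndependent : LinearIndependent ℤ nfMono := by
  refine LinearIndependent.of_comp nfCoords ?_
  rw [show nfCoords ∘ nfMono = fun i => Finsupp.single i 1 from funext nfCoords_nfMono]
  exact Finsupp.linearIndependent_single_one ℤ NFIndex

/-- The normal-form monomials form a `ℤ`-module basis of the quotient ring:
they are linearly independent and span. In particular every element is a
`ℤ`-linear combination of them in a unique way. -/
theorem nfMono_isBasis :
    LinearIndependent ℤ nfMono ∧ Submodule.span ℤ (Set.range nfMono) = ⊤ :=
  ⟨nfMono_linearIndependent, span_nfMono_eq_top⟩
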